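/- arXiv:2408.13477 — 5 statements merged into one kernel-verified Lean document; each statement's English description precedes it below -/
import Mathlib

section
/- Let G be a finite group, V a proper subgroup of finite index, and N a normal subgroup of G contained in V with N elementary abelian of order p^[G:V], where p is prime. Consider G acting transitively on [G:V]·p points via an embedding into the wreath product AGL_1(p) ≀ G_V where G_V is the image of G acting on cosets of V and the kernel of the projection G → G_V is N of full order p^[G:V]. Then the proportion of elements of G acting as a single full cycle on the [G:V]·p points is at most (p-1)/p times the proportion of full cycles in G_V. -/
/-!
Kernel elements act on each block by affine maps of order dividing `p`, hence by translations;
as the kernel has order `p ^ [G : V]`, it realises every translation vector, in particular some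
`m` translating the block `q₀` by `1` and fixing all other blocks. If `g` is a full cycle on the
`n = [G : V]` blocks, `g ^ n` stabilises `q₀`, and `(g * m) ^ n` acts on `q₀` as `g ^ n` after
`z ↦ z + 1`. Hence on each coset `g⟨m⟩` exactly one element has `g ^ n` fixing the point
`(q₀, 0)`, and such an element is not a full cycle on the `n * p` points.
-/

open Equiv Function

namespace Equiv.Perm

variable {α β : Type*} [Fintype α] [DecidableEq α]

def IsFullCycle (σ : Perm α) : Prop :=
  σ.IsCycle ∧ σ.support = Finset.univ

namespace IsFullCycle

variable {σ : Perm α}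

theorem apply_ne (hσ : σ.IsFullCycle) (x : α) : σ x ≠ x :=
  mem_support.1 (hσ.2 ▸ Finset.mem_univ x)

theorem pow_card_eq_one (hσ : σ.IsFullCycle) : σ ^ Fintype.card α = 1 := by
  rw [← Finset.card_univ, ← hσ.2, ← hσ.1.orderOf, pow_orderOf_eq_one]

theorem card_dvd_of_pow_apply_eq_self (hσ : σ.IsFullCycle) {k : ℕ} {x : α}
    (h : (σ ^ k) x = x) : Fintype.card α ∣ k := by
  rw [← Finset.card_univ, ← hσ.2, ← hσ.1.orderOf]
  exact orderOf_dvd_of_pow_eq_one ((hσ.1.pow_eq_one_iff' (hσ.apply_ne x)).2 h)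

theorem pow_apply_ne (hσ : σ.IsFullCycle) {k : ℕ} (hk : 0 < k) (hkα : k < Fintype.card α)
    (x : α) : (σ ^ k) x ≠ x := fun h =>
  hkα.not_ge (Nat.le_of_dvd hk (hσ.card_dvd_of_pow_apply_eq_self h))

theorem of_semiconj [Fintype β] [DecidableEq β] [Nontrivial β] {τ : Perm β} {f : α → β}
    (hf : Surjective f) (h : Semiconj f σ τ) (hσ : σ.IsFullCycle) : τ.IsFullCycle := by
  have reach : ∀ y y' : β, ∃ k : ℕ, (τ ^ k) y = y' := by
    intro y y'
    obtain ⟨x, rfl⟩ := hf y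
    obtain ⟨x', rfl⟩ := hf y'
    obtain ⟨k, hk⟩ := hσ.1.exists_pow_eq (hσ.apply_ne x) (hσ.apply_ne x')
    refine ⟨k, ?_⟩
    rw [← hk, coe_pow, coe_pow, (h.iterate_right k).eq]
  have moved : ∀ y : β, τ y ≠ y := fun y hy => by
    obtain ⟨y', hy'⟩ := exists_ne y
    obtain ⟨k, hk⟩ := reach y y'
    exact hy' (hk ▸ pow_apply_eq_self_of_apply_eq_self hy k)
  refine ⟨⟨Classical.arbitrary β, moved _, fun y _ => ?_⟩,
    Finset.eq_univ_of_forall fun y => mem_support.2 (moved y)⟩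
  obtain ⟨k, hk⟩ := reach (Classical.arbitrary β) y
  exact ⟨k, by rwa [zpow_natCast]⟩

end IsFullCycle

theorem mul_pow_apply_eq_pow_apply_apply {σ τ : Perm β} {x : β} {k : ℕ} (hk : 0 < k)
    (hτ : ∀ j, 0 < j → j < k → τ ((σ ^ j) (τ x)) = (σ ^ j) (τ x)) :
    ((σ * τ) ^ k) x = (σ ^ k) (τ x) := by
  induction k, hk using Nat.le_induction with
  | base => simp
  | succ k hk ih =>
    rw [pow_succ', mul_apply, ih fun j hj hjk => hτ j hj (by omega), mul_apply,
      hτ k hk (by omega), pow_succ', mul_apply]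

end Equiv.Perm

theorem iterate_affine_sub {R : Type*} [CommRing R] (a b x y : R) (k : ℕ) :
    (fun z => a * z + b)^[k] x - (fun z => a * z + b)^[k] y = a ^ k * (x - y) := by
  induction k with
  | zero => simp
  | succ k ih =>
    rw [iterate_succ_apply', iterate_succ_apply']
    linear_combination a * ih

theorem ZMod.eq_one_of_iterate_affine_eq_id {p : ℕ} [Fact p.Prime] {a b : ZMod p}
    (h : (fun z => a * z + b)^[p] = id) : a = 1 := by
  have := iterate_affine_sub a b 1 0 p
  rw [h, ZMod.pow_card] at this
  simpa using this.symm

theorem card_fiber_mul_eq_card_of_shift {Z Y : Type*} [Finite Z] {n : ℕ} [NeZero n]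
    (ρ : Perm Z) (f : Z → ZMod n → Y) (y : Y) (hf : ∀ g, ∃! z, f g z = y)
    (hρ : ∀ g z, f (ρ g) z = f g (z + 1)) :
    Nat.card {g // f g 0 = y} * n = Nat.card Z := by
  have hρpow : ∀ (k : ℕ) g z, f ((ρ ^ k) g) z = f g (z + k) := by
    intro k
    induction k with
    | zero => simp
    | succ k ih => intro g z; rw [pow_succ, Perm.mul_apply, ih, hρ, Nat.cast_succ, add_assoc]
  have fst_bij : Bijective (fun c : {c : Z × ZMod n // f c.1 c.2 = y} => c.1.1) :=
    ⟨fun ⟨⟨g, z⟩, hz⟩ ⟨⟨g', z'⟩, hz'⟩ hg => by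
      obtain rfl : g = g' := hg
      obtain rfl : z = z' := (hf g).unique hz hz'
      rfl,
      fun g => ⟨⟨(g, (hf g).exists.choose), (hf g).exists.choose_spec⟩, rfl⟩⟩
  let shift (z : ZMod n) : {g // f g z = y} ≃ {g // f g 0 = y} :=
    (ρ ^ z.val).subtypeEquiv fun g => by rw [hρpow, zero_add, ZMod.natCast_zmod_val]
  calc Nat.card {g // f g 0 = y} * n
      = Nat.card (Σ _ : ZMod n, {g // f g 0 = y}) := by
        rw [Nat.card_sigma, Finset.sum_const, Finset.card_univ, ZMod.card, smul_eq_mul, mul_comm]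
    _ = Nat.card {c : ZMod n × Z // f c.2 c.1 = y} :=
        Nat.card_congr ((Equiv.sigmaCongrRight shift).symm.trans
          (Equiv.subtypeProdEquivSigmaSubtype fun z g => f g z = y).symm)
    _ = Nat.card {c : Z × ZMod n // f c.1 c.2 = y} :=
        Nat.card_congr ((Equiv.prodComm _ _).subtypeEquiv fun _ => Iff.rfl)
    _ = Nat.card Z := Nat.card_congr (Equiv.ofBijective _ fst_bij)

section AffineBlocks

open MulAction

variable {G Q X : Type*} [Group G] [MulAction G Q] {p : ℕ}

/-- `φ` maps `G` into the wreath product `AGL₁(p) ≀ Sym Q`, the blocks being the ranges of `ι q`. -/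
def IsBlockAffine (φ : G →* Perm X) (ι : Q → ZMod p → X) : Prop :=
  ∀ (g : G) (q : Q), ∃ a : (ZMod p)ˣ, ∃ b : ZMod p, ∀ z, φ g (ι q z) = ι (g • q) (a * z + b)

variable {φ : G →* Perm X} {ι : Q → ZMod p → X}

theorem exists_translation_of_mem_ker [Fact p.Prime] (hι : ∀ q, Injective (ι q))
    (haff : IsBlockAffine φ ι) {m : G} (hm : m ∈ (toPermHom G Q).ker) (hmp : m ^ p = 1) :
    ∃ t : Q → ZMod p, ∀ q z, φ m (ι q z) = ι q (z + t q) := by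
  suffices ∀ q, ∃ b : ZMod p, ∀ z, φ m (ι q z) = ι q (z + b) by
    choose t ht using this
    exact ⟨t, ht⟩
  intro q
  obtain ⟨a, b, hab⟩ := haff m q
  have hmq : m • q = q := Perm.ext_iff.1 hm q
  rw [hmq] at hab
  have hsemi : Semiconj (ι q) (fun z => a * z + b) (φ m) := fun z => (hab z).symm
  have hid : (fun z => (a : ZMod p) * z + b)^[p] = id := funext fun z =>
    hι q <| by rw [(hsemi.iterate_right p).eq, ← Perm.coe_pow, ← map_pow, hmp, map_one]; rfl
  refine ⟨b, fun z => ?_⟩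
  rw [hab, ZMod.eq_one_of_iterate_affine_eq_id hid, one_mul]

theorem exists_mem_ker_apply_eq_translation [Fact p.Prime] [Finite Q] (hφ : Injective φ)
    (hbij : Bijective (fun qz : Q × ZMod p => ι qz.1 qz.2))
    (haff : IsBlockAffine φ ι) (hpow : ∀ m ∈ (toPermHom G Q).ker, m ^ p = 1)
    (hcard : Nat.card (toPermHom G Q).ker = p ^ Nat.card Q) (t : Q → ZMod p) :
    ∃ m ∈ (toPermHom G Q).ker, ∀ q z, φ m (ι q z) = ι q (z + t q) := by
  have hι (q : Q) : Injective (ι q) := hbij.1.comp (Prod.mk_right_injective q)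
  choose T hT using fun m : (toPermHom G Q).ker =>
    exists_translation_of_mem_ker hι haff m.2 (hpow m m.2)
  have hT_inj : Injective T := fun m m' h => Subtype.ext <| hφ <| Perm.ext fun x => by
    obtain ⟨⟨q, z⟩, rfl⟩ := hbij.2 x
    simp only [hT, h]
  have hT_bij : Bijective T := hT_inj.bijective_of_nat_card_le <| by
    rw [hcard, Nat.card_fun, Nat.card_zmod]
  obtain ⟨m, rfl⟩ := hT_bij.2 t
  exact ⟨m, m.2, hT m⟩

variable [Fintype Q] [DecidableEq Q]

theorem pow_smul_ne_self_of_isFullCycle {g : G} (hg : (toPermHom G Q g).IsFullCycle)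
    {j : ℕ} (hj : 0 < j) (hjn : j < Fintype.card Q) (q : Q) : (g ^ j) • q ≠ q := fun h =>
  hg.pow_apply_ne hj hjn q (by rwa [← map_pow])

theorem pow_card_mul_translation_apply (haff : IsBlockAffine φ ι) {g m : G}
    (hg : (toPermHom G Q g).IsFullCycle) {q₀ : Q}
    (hm : ∀ q z, φ m (ι q z) = ι q (z + (Pi.single q₀ 1 : Q → ZMod p) q)) (z : ZMod p) :
    (φ (g * m) ^ Fintype.card Q) (ι q₀ z) = (φ g ^ Fintype.card Q) (ι q₀ (z + 1)) := by
  rw [map_mul, Perm.mul_pow_apply_eq_pow_apply_apply (Fintype.card_pos_iff.2 ⟨q₀⟩), hm,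
    Pi.single_eq_same]
  intro j hj hjn
  obtain ⟨a, b, hab⟩ := haff (g ^ j) q₀
  rw [hm, Pi.single_eq_same, ← map_pow, hab, hm,
    Pi.single_eq_of_ne (pow_smul_ne_self_of_isFullCycle hg hj hjn q₀), add_zero]

theorem existsUnique_pow_card_apply_eq (hι : ∀ q, Injective (ι q)) (haff : IsBlockAffine φ ι)
    {g : G} (hg : (toPermHom G Q g).IsFullCycle) (q₀ : Q) (w : ZMod p) :
    ∃! z, (φ g ^ Fintype.card Q) (ι q₀ z) = ι q₀ w := by
  obtain ⟨a, b, hab⟩ := haff (g ^ Fintype.card Q) q₀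
  have hq₀ : (g ^ Fintype.card Q) • q₀ = q₀ := by
    have := Perm.ext_iff.1 hg.pow_card_eq_one q₀
    rwa [← map_pow] at this
  simp only [← map_pow, hab, hq₀, (hι q₀).eq_iff]
  exact ((Units.mulLeft a).trans (Equiv.addRight b)).bijective.existsUnique w

variable [Fintype X] [DecidableEq X]

theorem isFullCycle_toPermHom_of_isFullCycle [Nontrivial Q]
    (hbij : Bijective (fun qz : Q × ZMod p => ι qz.1 qz.2))
    (haff : IsBlockAffine φ ι) {g : G} (hg : (φ g).IsFullCycle) :
    (toPermHom G Q g).IsFullCycle := by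
  let e := Equiv.ofBijective _ hbij
  refine hg.of_semiconj (f := fun x => (e.symm x).1)
    (fun q => ⟨e (q, 0), congrArg Prod.fst (e.symm_apply_apply (q, 0))⟩) fun x => ?_
  obtain ⟨⟨q, z⟩, rfl⟩ := e.surjective x
  obtain ⟨a, b, hab⟩ := haff g q
  change (e.symm (φ g (ι q z))).1 = g • (e.symm (e (q, z))).1
  rw [hab, e.symm_apply_apply]
  exact congrArg Prod.fst (e.symm_apply_apply (g • q, a * z + b))

theorem card_isFullCycle_le [Finite G] [Nontrivial Q] (hp : 1 < p)
    (hbij : Bijective (fun qz : Q × ZMod p => ι qz.1 qz.2))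
    (haff : IsBlockAffine φ ι) {m : G} (hmker : m ∈ (toPermHom G Q).ker) {q₀ : Q}
    (hm : ∀ q z, φ m (ι q z) = ι q (z + (Pi.single q₀ 1 : Q → ZMod p) q)) :
    (Nat.card {g // (φ g).IsFullCycle} : ℚ) ≤
      ((p : ℚ) - 1) / p * Nat.card {g // (toPermHom G Q g).IsFullCycle} := by
  have : NeZero p := ⟨by omega⟩
  have hι (q : Q) : Injective (ι q) := hbij.1.comp (Prod.mk_right_injective q)
  set Z := {g // (toPermHom G Q g).IsFullCycle}
  let ρ : Perm Z := (Equiv.mulRight m).subtypeEquiv fun g => by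
    rw [coe_mulRight, map_mul, hmker, mul_one]
  let F (g : Z) (z : ZMod p) : X := (φ g ^ Fintype.card Q) (ι q₀ z)
  have hfiber : Nat.card {g // F g 0 = ι q₀ 0} * p = Nat.card Z :=
    card_fiber_mul_eq_card_of_shift ρ F _
      (fun g => existsUnique_pow_card_apply_eq hι haff g.2 q₀ 0)
      fun g z => pow_card_mul_translation_apply haff g.2 hm z
  have hcompl :
      Nat.card {g // F g 0 = ι q₀ 0} + Nat.card {g // F g 0 ≠ ι q₀ 0} = Nat.card Z := by
    rw [← Nat.card_sum, Nat.card_congr (Equiv.sumCompl _)]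
  have hcardX : Fintype.card X = Fintype.card Q * p := by
    rw [← Fintype.card_congr (Equiv.ofBijective _ hbij), Fintype.card_prod, ZMod.card]
  have hQX : Fintype.card Q < Fintype.card X := by
    rw [hcardX]
    exact lt_mul_of_one_lt_right Fintype.card_pos hp
  have hW : Nat.card {g // (φ g).IsFullCycle} ≤ Nat.card {g // F g 0 ≠ ι q₀ 0} :=
    Nat.card_le_card_of_injective
      (fun g => ⟨⟨g, isFullCycle_toPermHom_of_isFullCycle hbij haff g.2⟩,
        by simpa only [map_pow] using g.2.pow_apply_ne Fintype.card_pos hQX _⟩)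
      fun g g' h => Subtype.ext (congrArg (fun g => g.1.1) h)
  have hcount : Nat.card {g // (φ g).IsFullCycle} * p + Nat.card Z ≤ Nat.card Z * p := by
    nlinarith [Nat.mul_le_mul_right p hW]
  rw [div_mul_eq_mul_div, le_div_iff₀ (by positivity)]
  have hcount' : (Nat.card {g // (φ g).IsFullCycle} * p + Nat.card Z : ℚ) ≤ Nat.card Z * p := by
    exact_mod_cast hcount
  linarith

end AffineBlocks

theorem full_cycle_proportion_le_of_elementary_abelian_kernel_general
    {G : Type*} [Group G] [Fintype G] (V : Subgroup G) (hV : V ≠ ⊤)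
    [Fintype (G ⧸ V)] [DecidableEq (G ⧸ V)]
    (p : ℕ) (hp : p.Prime)
    {X : Type*} [Fintype X] [DecidableEq X]
    (φ : G →* Equiv.Perm X) (hinj : Function.Injective φ)
    (ι : G ⧸ V → ZMod p → X)
    (hbij : Function.Bijective (fun qz : (G ⧸ V) × ZMod p => ι qz.1 qz.2))
    (haff : ∀ (g : G) (q : G ⧸ V), ∃ a : (ZMod p)ˣ, ∃ b : ZMod p,
      ∀ z : ZMod p, φ g (ι q z) = ι (g • q) ((a : ZMod p) * z + b))
    (N : Subgroup G) (hN : N = (MulAction.toPermHom G (G ⧸ V)).ker)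
    (hNelem : ∀ a ∈ N, a ^ p = 1)
    (hNcard : Nat.card N = p ^ V.index) :
    (Nat.card {g : G // (φ g).IsCycle ∧ (φ g).support = Finset.univ} : ℚ) / Nat.card G ≤
      ((p : ℚ) - 1) / p *
        ((Nat.card {g : G // (MulAction.toPermHom G (G ⧸ V) g).IsCycle ∧
            (MulAction.toPermHom G (G ⧸ V) g).support = Finset.univ} : ℚ) / Nat.card G) := by
  subst hN
  have : Fact p.Prime := ⟨hp⟩
  have : Nontrivial (G ⧸ V) := QuotientGroup.nontrivial_iff.2 hV
  obtain ⟨m, hmker, hm⟩ := exists_mem_ker_apply_eq_translation hinj hbij haff hNelem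
    (by rw [hNcard, Subgroup.index_eq_card]) (Pi.single (default : G ⧸ V) 1)
  rw [← mul_div_assoc]
  exact div_le_div_of_nonneg_right (card_isFullCycle_le hp.one_lt hbij haff hmker hm)
    (Nat.cast_nonneg _)

/-- Let `G` be a finite group, `V` a proper subgroup (of finite index),
`p` a prime, and let `G` act faithfully and transitively on `[G:V]·p` points `X` via
an embedding `φ` into the wreath product `AGL₁(p) ≀ G_V`: the points are organized in
blocks indexed by `G ⧸ V` (via the bijective parametrization `ι`), `G` permutes the
blocks through its coset action on `G ⧸ V`, and acts on each block (identified with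
`ZMod p`) by affine maps `z ↦ a*z + b`. Assume the kernel `N` of the projection
`G → G_V` (the coset action) is elementary abelian of the maximal possible order
`p^[G:V]`. Then the proportion (in `G`, equivalently in the faithful image `G_U`) of
elements acting as a single full cycle on `X` is at most `(p-1)/p` times the
proportion (in `G`, equivalently in `G_V`) of elements acting as full cycles on
`G ⧸ V`. -/
theorem full_cycle_proportion_le_of_elementary_abelian_kernel
    {G : Type*} [Group G] [Fintype G] (V : Subgroup G) (hV : V ≠ ⊤)
    [Fintype (G ⧸ V)] [DecidableEq (G ⧸ V)]
    (p : ℕ) (hp : p.Prime) [NeZero p]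
    {X : Type*} [Fintype X] [DecidableEq X]
    (φ : G →* Equiv.Perm X) (hinj : Function.Injective φ)
    (htrans : ∀ x y : X, ∃ g : G, φ g x = y)
    (hcard : Fintype.card X = V.index * p)
    (ι : G ⧸ V → ZMod p → X)
    (hbij : Function.Bijective (fun qz : (G ⧸ V) × ZMod p => ι qz.1 qz.2))
    (haff : ∀ (g : G) (q : G ⧸ V), ∃ a : (ZMod p)ˣ, ∃ b : ZMod p,
      ∀ z : ZMod p, φ g (ι q z) = ι (g • q) ((a : ZMod p) * z + b))
    (N : Subgroup G) (hN : N = (MulAction.toPermHom G (G ⧸ V)).ker)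
    (hNab : ∀ a b : G, a ∈ N → b ∈ N → a * b = b * a)
    (hNelem : ∀ a ∈ N, a ^ p = 1)
    (hNcard : Nat.card N = p ^ V.index) :
    (Nat.card {g : G // (φ g).IsCycle ∧ (φ g).support = Finset.univ} : ℚ) / Nat.card G ≤
      ((p : ℚ) - 1) / p *
        ((Nat.card {g : G // (MulAction.toPermHom G (G ⧸ V) g).IsCycle ∧
            (MulAction.toPermHom G (G ⧸ V) g).support = Finset.univ} : ℚ) / Nat.card G) :=
  full_cycle_proportion_le_of_elementary_abelian_kernel_general V hV p hp φ hinj ι hbij haff N hN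
    hNelem hNcard
end

section
/- Let p_1, ..., p_r be odd primes with product n, let p be an odd prime and e ≥ 1 with p^e not dividing n. Then any element σ of the iterated wreath product AGL_1(p_r) ≀ ⋯ ≀ AGL_1(p_1) (acting imprimitively on n points), all of whose cycles have length 1 or q = p^e, has an even number of q-cycles. In particular, such a wreath product contains no element that is a product of an odd number of disjoint q-cycles (with all other points fixed). -/
/-!
On the first coordinate `σ` acts by an affine map `x ↦ a * x + b` of `ZMod (p 0)`, so its fixed
points lie over the fixed points `x₀` of this map. Each block `{z | z 0 = x₀}` is then
`σ`-invariant, and `σ` restricts to an element of the smaller wreath product whose cycles still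
have length `1` or `q`; by induction it has an odd number of fixed points. Because `q ∤ n`, the
`q`-cycles cannot cover all `n` points, so `σ` and hence the affine map have a fixed point, and
then the affine map fixes exactly one point (`a ≠ 1`) or all `p 0` points (`a = 1`, `b = 0`).
Either way `σ` has an odd number of fixed points, and since `n = #fix σ + k * q` with `n` and `q`
odd, the number `k` of `q`-cycles is even.
-/

/-- Membership in the iterated imprimitive wreath product
`AGL₁(p (r-1)) ≀ ⋯ ≀ AGL₁(p 0)` acting on the `∏ i, p i` points
`(i : Fin r) → ZMod (p i)` (coordinate `0` indexing the coarsest blocks):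
a permutation belongs to it iff each coordinate of the image depends only on the
earlier coordinates together with an affine (`x ↦ a*x + b`, `a` a unit) action on
the current coordinate. -/
def IsIterAffine {r : ℕ} (p : Fin r → ℕ) (σ : Equiv.Perm ((i : Fin r) → ZMod (p i))) : Prop :=
  ∀ (i : Fin r) (x : (j : Fin r) → ZMod (p j)), ∃ a b : ZMod (p i), IsUnit a ∧
    ∀ y : (j : Fin r) → ZMod (p j), (∀ j : Fin r, j < i → y j = x j) →
      σ y i = a * y i + b

open Equiv Function Finset

namespace Equiv.Perm

variable {α : Type*} [Fintype α] [DecidableEq α]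

theorem cycleType_subset_of_eqOn_support {f g : Perm α} (h : ∀ a ∈ f.support, f a = g a) :
    f.cycleType ⊆ g.cycleType := by
  intro n hn
  rw [cycleType_def, Multiset.mem_map] at hn ⊢
  obtain ⟨c, hc, rfl⟩ := hn
  refine ⟨c, ?_, rfl⟩
  obtain ⟨hcyc, hcf⟩ := mem_cycleFactorsFinset_iff.mp hc
  exact mem_cycleFactorsFinset_iff.mpr ⟨hcyc, fun a ha =>
    (hcf a ha).trans (h a (mem_cycleFactorsFinset_support_le hc ha))⟩

theorem cycleType_subset_of_semiconj {β : Type*} [Fintype β] [DecidableEq β]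
    {τ : Perm β} {σ : Perm α} (ι : β ↪ α) (h : ∀ b, σ (ι b) = ι (τ b)) :
    τ.cycleType ⊆ σ.cycleType := by
  have hext : (τ.viaFintypeEmbedding ι).cycleType = τ.cycleType := cycleType_extendDomain _
  rw [← hext]
  refine cycleType_subset_of_eqOn_support fun a ha => ?_
  by_cases hrange : a ∈ Set.range ι
  · obtain ⟨b, rfl⟩ := hrange
    rw [viaFintypeEmbedding_apply_image, h]
  · exact absurd (viaFintypeEmbedding_apply_notMem_range τ ι hrange) (mem_support.mp ha)

variable {σ : Perm α} {q : ℕ}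

theorem card_fixedPoints_add_card_cycleType_mul (hσ : ∀ c ∈ σ.cycleType, c = q) :
    Fintype.card (fixedPoints σ) + Multiset.card σ.cycleType * q = Fintype.card α := by
  rw [card_fixedPoints, ← smul_eq_mul, ← Multiset.sum_replicate,
    ← Multiset.eq_replicate_card.mpr hσ]
  exact Nat.sub_add_cancel σ.sum_cycleType_le

theorem exists_apply_eq_self_of_not_dvd_card (hσ : ∀ c ∈ σ.cycleType, c = q)
    (hq : ¬ q ∣ Fintype.card α) : ∃ x, σ x = x := by
  by_contra! hfree
  have hempty : Fintype.card (fixedPoints σ) = 0 :=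
    Fintype.card_eq_zero_iff.mpr ⟨fun x => hfree x x.2⟩
  rw [← card_fixedPoints_add_card_cycleType_mul hσ, hempty, zero_add] at hq
  exact hq (dvd_mul_left q _)

theorem even_card_cycleType_of_odd_card_fixedPoints (hσ : ∀ c ∈ σ.cycleType, c = q)
    (hα : Odd (Fintype.card α)) (hq : Odd q) (hfix : Odd (Fintype.card (fixedPoints σ))) :
    Even (Multiset.card σ.cycleType) := by
  rw [← card_fixedPoints_add_card_cycleType_mul hσ] at hα
  have hmul : Even (Multiset.card σ.cycleType * q) := (Nat.odd_add.mp hα).mp hfix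
  exact (Nat.even_mul.mp hmul).resolve_right (Nat.not_even_iff_odd.mpr hq)

end Equiv.Perm

theorem odd_card_filter_affine_eq_self {K : Type*} [Field K] [Fintype K] [DecidableEq K]
    (hK : Odd (Fintype.card K)) {a b : K} (h : ∃ x, a * x + b = x) :
    Odd #{x | a * x + b = x} := by
  by_cases ha : a = 1
  · obtain ⟨x, hx⟩ := h
    have hb : b = 0 := by linear_combination hx - ha * x
    simpa [ha, hb] using hK
  · have hfix : ∀ x, a * x + b = x ↔ x = b / (1 - a) := fun x => by
      rw [eq_div_iff (sub_ne_zero.mpr (Ne.symm ha))]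
      constructor <;> intro hx <;> linear_combination -hx
    simp only [hfix, filter_eq', mem_univ, if_true, card_singleton, odd_one]

section Fiber

variable {m : ℕ} {α : Fin (m + 1) → Type*}

theorem Fin.cons_tail_eq_of_zero_eq {x₀ : α 0} {z : (i : Fin (m + 1)) → α i} (h : z 0 = x₀) :
    Fin.cons x₀ (Fin.tail z) = z :=
  h ▸ Fin.cons_self_tail z

def fiberPerm (σ : Perm ((i : Fin (m + 1)) → α i)) (x₀ : α 0)
    (h : ∀ z, σ z 0 = x₀ ↔ z 0 = x₀) : Perm ((i : Fin m) → α i.succ) where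
  toFun y := Fin.tail (σ (Fin.cons x₀ y))
  invFun y := Fin.tail (σ.symm (Fin.cons x₀ y))
  left_inv y := by
    dsimp only
    rw [Fin.cons_tail_eq_of_zero_eq ((h _).mpr (Fin.cons_zero _ _)), σ.symm_apply_apply,
      Fin.tail_cons]
  right_inv y := by
    dsimp only
    rw [Fin.cons_tail_eq_of_zero_eq ((h _).mp (by simp)), σ.apply_symm_apply, Fin.tail_cons]

theorem fiberPerm_spec (σ : Perm ((i : Fin (m + 1)) → α i)) (x₀ : α 0)
    (h : ∀ z, σ z 0 = x₀ ↔ z 0 = x₀) (y : (i : Fin m) → α i.succ) :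
    σ (Fin.cons x₀ y) = Fin.cons x₀ (fiberPerm σ x₀ h y) :=
  (Fin.cons_tail_eq_of_zero_eq ((h _).mpr (Fin.cons_zero _ _))).symm

variable [∀ i, Fintype (α i)] [∀ i, DecidableEq (α i)]

theorem card_fixedPoints_eq_sum_card_fiber (σ : Perm ((i : Fin (m + 1)) → α i)) :
    Fintype.card (fixedPoints σ) =
      ∑ x₀, Fintype.card {y : (i : Fin m) → α i.succ // σ (Fin.cons x₀ y) = Fin.cons x₀ y} := by
  rw [← Fintype.card_sigma]
  refine Fintype.card_congr (((Fin.consEquiv α).symm.subtypeEquiv fun z => ?_).trans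
    (Equiv.subtypeProdEquivSigmaSubtype fun x₀ y => σ (Fin.cons x₀ y) = Fin.cons x₀ y))
  simp [Fin.consEquiv, IsFixedPt]

theorem card_fixedPoints_fiberPerm (σ : Perm ((i : Fin (m + 1)) → α i)) (x₀ : α 0)
    (h : ∀ z, σ z 0 = x₀ ↔ z 0 = x₀) :
    Fintype.card (fixedPoints (fiberPerm σ x₀ h)) =
      Fintype.card {y : (i : Fin m) → α i.succ // σ (Fin.cons x₀ y) = Fin.cons x₀ y} :=
  Fintype.card_congr <| Equiv.subtypeEquivRight fun y => by
    rw [fiberPerm_spec σ x₀ h, (Fin.cons_right_injective x₀).eq_iff]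
    rfl

theorem cycleType_fiberPerm_subset (σ : Perm ((i : Fin (m + 1)) → α i)) (x₀ : α 0)
    (h : ∀ z, σ z 0 = x₀ ↔ z 0 = x₀) : (fiberPerm σ x₀ h).cycleType ⊆ σ.cycleType :=
  Perm.cycleType_subset_of_semiconj ⟨_, Fin.cons_right_injective x₀⟩ (fiberPerm_spec σ x₀ h)

end Fiber

theorem card_pi_zmod {r : ℕ} (p : Fin r → ℕ) [∀ i, NeZero (p i)] :
    Fintype.card ((i : Fin r) → ZMod (p i)) = ∏ i, p i := by
  simp [ZMod.card]

namespace IsIterAffine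

variable {m : ℕ} {p : Fin (m + 1) → ℕ} {σ : Perm ((i : Fin (m + 1)) → ZMod (p i))}

theorem exists_affine_zero (hσ : IsIterAffine p σ) :
    ∃ a b : ZMod (p 0), IsUnit a ∧ ∀ z, σ z 0 = a * z 0 + b := by
  obtain ⟨a, b, ha, hab⟩ := hσ 0 0
  exact ⟨a, b, ha, fun z => hab z fun j hj => absurd hj (Fin.not_lt_zero j)⟩

theorem fiberPerm (hσ : IsIterAffine p σ) (x₀ : ZMod (p 0))
    (h : ∀ z, σ z 0 = x₀ ↔ z 0 = x₀) :
    IsIterAffine (fun i => p i.succ) (_root_.fiberPerm σ x₀ h) := by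
  intro i x
  obtain ⟨a, b, ha, hab⟩ := hσ i.succ (Fin.cons x₀ x)
  refine ⟨a, b, ha, fun y hy => ?_⟩
  have hprefix : ∀ j < i.succ, (Fin.cons x₀ y : (j : Fin (m + 1)) → ZMod (p j)) j =
      (Fin.cons x₀ x : (j : Fin (m + 1)) → ZMod (p j)) j := by
    intro j hj
    cases j using Fin.cases with
    | zero => rfl
    | succ j => exact hy j (Fin.succ_lt_succ_iff.mp hj)
  simpa [fiberPerm_spec σ x₀ h] using hab _ hprefix

end IsIterAffine

theorem IsIterAffine.odd_card_fixedPoints {r : ℕ} {p : Fin r → ℕ} [∀ i, NeZero (p i)]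
    (hp : ∀ i, (p i).Prime ∧ Odd (p i)) {q : ℕ} (hq : ¬ q ∣ ∏ i, p i)
    {σ : Perm ((i : Fin r) → ZMod (p i))} (hσ : IsIterAffine p σ)
    (hcyc : ∀ c ∈ σ.cycleType, c = q) :
    Odd (Fintype.card (fixedPoints σ)) := by
  induction r with
  | zero =>
    rw [Fintype.card_eq_one_iff.mpr ⟨⟨isEmptyElim, Subsingleton.elim _ _⟩,
      fun _ => Subsingleton.elim _ _⟩]
    exact odd_one
  | succ m ih =>
    have : Fact (p 0).Prime := ⟨(hp 0).1⟩
    obtain ⟨a, b, ha, hab⟩ := hσ.exists_affine_zero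
    have hblock : ∀ x₀, a * x₀ + b = x₀ → ∀ z, σ z 0 = x₀ ↔ z 0 = x₀ := fun x₀ hx₀ z =>
      calc σ z 0 = x₀ ↔ a * z 0 + b = a * x₀ + b := by rw [hab, hx₀]
        _ ↔ z 0 = x₀ := by rw [add_left_inj, ha.mul_right_inj]
    have hfiber_odd : ∀ x₀ ∈ ({x₀ | a * x₀ + b = x₀} : Finset (ZMod (p 0))), Odd (Fintype.card
        {y : (i : Fin m) → ZMod (p i.succ) // σ (Fin.cons x₀ y) = Fin.cons x₀ y}) := by
      intro x₀ hx₀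
      have h := hblock x₀ (mem_filter.mp hx₀).2
      rw [← card_fixedPoints_fiberPerm σ x₀ h]
      exact ih (fun i => hp i.succ) (fun hdvd => hq (Fin.prod_univ_succ p ▸ hdvd.mul_left _))
        (hσ.fiberPerm x₀ h) fun c hc => hcyc c (cycleType_fiberPerm_subset σ x₀ h hc)
    have hfixed_of_fiber_ne_zero : ∀ x₀, Fintype.card
        {y : (i : Fin m) → ZMod (p i.succ) // σ (Fin.cons x₀ y) = Fin.cons x₀ y} ≠ 0 →
        a * x₀ + b = x₀ := fun x₀ hne => by
      obtain ⟨y, hy⟩ := Fintype.card_pos_iff.mp (Nat.pos_of_ne_zero hne)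
      simpa using (hab _).symm.trans (congrFun hy 0)
    obtain ⟨z, hz⟩ := Perm.exists_apply_eq_self_of_not_dvd_card hcyc (by rwa [card_pi_zmod])
    rw [card_fixedPoints_eq_sum_card_fiber, ← sum_filter_of_ne fun x₀ _ => hfixed_of_fiber_ne_zero x₀,
      odd_sum_iff_odd_card_odd, filter_true_of_mem hfiber_odd]
    exact odd_card_filter_affine_eq_self (by rw [ZMod.card]; exact (hp 0).2)
      ⟨z 0, by rw [← hab, hz]⟩

theorem iterated_affine_wreath_even_q_cycles_general {r : ℕ} (p : Fin r → ℕ)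
    [∀ i, NeZero (p i)] (hp : ∀ i, (p i).Prime ∧ Odd (p i))
    (pp e : ℕ) (hppodd : Odd pp)
    (hnd : ¬ pp ^ e ∣ ∏ i, p i)
    (σ : Equiv.Perm ((i : Fin r) → ZMod (p i))) (hσ : IsIterAffine p σ)
    (hcyc : ∀ c ∈ σ.cycleType, c = pp ^ e) :
    Even (Multiset.card σ.cycleType) := by
  have hn : Odd (∏ i, p i) := prod_induction p Odd (fun _ _ => Odd.mul) odd_one fun i _ => (hp i).2
  rw [← card_pi_zmod] at hn
  exact Perm.even_card_cycleType_of_odd_card_fixedPoints hcyc hn hppodd.pow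
    (hσ.odd_card_fixedPoints hp hnd hcyc)

/-- Let `p 0, …, p (r-1)` be odd primes, let `pp` be an odd prime and
`e ≥ 1` with `pp^e` not dividing `n = ∏ i, p i`. Then any element `σ` of the iterated
wreath product `AGL₁(p (r-1)) ≀ ⋯ ≀ AGL₁(p 0)` (acting imprimitively on `n` points),
all of whose cycles have length `1` or `q = pp^e`, has an even number of `q`-cycles;
in particular, the wreath product contains no element that is a product of an odd
number of disjoint `q`-cycles (all other points being fixed). -/
theorem iterated_affine_wreath_even_q_cycles {r : ℕ} (p : Fin r → ℕ)
    [∀ i, NeZero (p i)] (hp : ∀ i, (p i).Prime ∧ Odd (p i))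
    (pp e : ℕ) (hpp : pp.Prime) (hppodd : Odd pp) (he : 1 ≤ e)
    (hnd : ¬ pp ^ e ∣ ∏ i, p i)
    (σ : Equiv.Perm ((i : Fin r) → ZMod (p i))) (hσ : IsIterAffine p σ)
    (hcyc : ∀ c ∈ σ.cycleType, c = pp ^ e) :
    Even (Multiset.card σ.cycleType) :=
  iterated_affine_wreath_even_q_cycles_general p hp pp e hppodd hnd σ hσ hcyc
end

section
/- Let k < m be two prime numbers with k ≤ m - 2, and let H ≤ S_n be a transitive subgroup of the iterated wreath product AGL_1(p_r) ≀ ⋯ ≀ AGL_1(p_1), where p_1⋯p_r = n and km divides n. Then H cannot contain both a k-cycle (fixing all other points) and an m-cycle (fixing all other points). -/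
open Equiv Finset Function

theorem card_le_card_filter_affine_ne_add_one {K : Type*} [Field K] [Fintype K] [DecidableEq K]
    {a b : K} (h : ∃ t, a * t + b ≠ t) :
    Fintype.card K ≤ #{t | a * t + b ≠ t} + 1 := by
  have hfix : #{t | a * t + b = t} ≤ 1 := by
    refine card_le_one.2 fun s hs t ht => ?_
    simp only [mem_filter, mem_univ, true_and] at hs ht
    have ha : a ≠ 1 := by
      rintro rfl
      obtain ⟨u, hu⟩ := h
      exact hu (by linear_combination hs)
    have : (a - 1) * (s - t) = 0 := by linear_combination hs - ht
    exact sub_eq_zero.1 ((mul_eq_zero.1 this).resolve_left (sub_ne_zero.2 ha))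
  have := card_filter_add_card_filter_not (s := univ) (p := fun t : K => a * t + b = t)
  simp only [← ne_eq, card_univ] at this
  omega

namespace Equiv.Perm

variable {α : Type*} {σ : Perm α}

theorem SameCycle.apply_eq_of_invariant [Finite α] {β : Type*} {f : α → β}
    (hf : ∀ x, f (σ x) = f x) {x y : α} (h : σ.SameCycle x y) : f x = f y := by
  obtain ⟨n, -, rfl⟩ := h.exists_pow_eq'
  rw [coe_pow]
  exact (congrFun (iterate_invariant (funext hf) n) x).symm

theorem IsCycle.injOn_support_of_semiconj [Fintype α] [DecidableEq α] {β : Type*}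
    (hσ : σ.IsCycle) (hq : σ.support.card.Prime) {π : α → β} {g : β → β}
    (hπ : ∀ x ∈ σ.support, π (σ x) = g (π x)) (hg : ∃ x ∈ σ.support, g (π x) ≠ π x) :
    Set.InjOn π σ.support := by
  obtain ⟨x₀, hx₀, hgx₀⟩ := hg
  have hiter : ∀ n, π ((σ ^ n) x₀) = g^[n] (π x₀) := by
    intro n
    induction n with
    | zero => rfl
    | succ n ih =>
      rw [pow_succ', mul_apply, hπ _ (pow_apply_mem_support.2 hx₀), ih, iterate_succ_apply']
  have hper : IsPeriodicPt g σ.support.card (π x₀) := by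
    rw [IsPeriodicPt, IsFixedPt, ← hiter, ← hσ.orderOf, pow_orderOf_eq_one, one_apply]
  have hmin : minimalPeriod g (π x₀) = σ.support.card :=
    (hq.eq_one_or_self_of_dvd _ hper.minimalPeriod_dvd).resolve_left
      fun h => hgx₀ (minimalPeriod_eq_one_iff_isFixedPt.1 h)
  intro y hy y' hy' hyy'
  obtain ⟨n, hn, rfl⟩ := (hσ.sameCycle (mem_support.1 hx₀) (mem_support.1 hy)).exists_pow_eq'
  obtain ⟨n', hn', rfl⟩ := (hσ.sameCycle (mem_support.1 hx₀) (mem_support.1 hy')).exists_pow_eq'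
  rw [hσ.orderOf, ← hmin] at hn hn'
  rw [hiter, hiter] at hyy'
  rw [iterate_injOn_Iio_minimalPeriod hn hn' hyy']

theorem exists_minimal_moved_coord {ι : Type*} [LinearOrder ι] [WellFoundedLT ι]
    {X : ι → Type*} {σ : Perm (∀ i, X i)} (hσ : σ ≠ 1) :
    ∃ i, (∃ y, σ y i ≠ y i) ∧ ∀ j < i, ∀ y, σ y j = y j := by
  obtain ⟨y, hy⟩ : ∃ y, σ y ≠ y := by
    by_contra! h
    exact hσ (ext h)
  obtain ⟨i, hi⟩ := ne_iff.1 hy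
  obtain ⟨i, hmoved, hmin⟩ := wellFounded_lt.has_min {i | ∃ y, σ y i ≠ y i} ⟨i, y, hi⟩
  exact ⟨i, hmoved, fun j hj y => by_contra fun h => hmin j ⟨y, h⟩ hj⟩

section CoordinateBlock

variable {ι : Type*} [Fintype ι] [LinearOrder ι] {X : ι → Type*}
  [∀ i, Fintype (X i)] [∀ i, DecidableEq (X i)] {σ : Perm (∀ i, X i)} {i : ι} {x : ∀ i, X i}
  {g : X i → X i}

theorem IsCycle.injOn_eval_support (hc : σ.IsCycle) (hq : σ.support.card.Prime)
    (hblock : ∀ y ∈ σ.support, ∀ j < i, y j = x j)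
    (hg : ∀ y, (∀ j < i, y j = x j) → σ y i = g (y i)) (hx : g (x i) ≠ x i) :
    Set.InjOn (eval i) (σ.support : Set (∀ i, X i)) := by
  have hx' : x ∈ σ.support := mem_support.2 fun h => hx (by rw [← hg x fun _ _ => rfl, h])
  exact hc.injOn_support_of_semiconj (π := eval i) hq (fun y hy => hg y (hblock y hy))
    ⟨x, hx', hx⟩

theorem mem_support_of_coord_moved (hg : ∀ y, (∀ j < i, y j = x j) → σ y i = g (y i))
    {y : ∀ i, X i} (hy : ∀ j < i, y j = x j) (hmoved : g (y i) ≠ y i) : y ∈ σ.support :=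
  mem_support.2 fun h => hmoved (by rw [← hg y hy, h])

theorem isTop_of_injOn_eval_support [∀ i, Nontrivial (X i)]
    (hg : ∀ y, (∀ j < i, y j = x j) → σ y i = g (y i)) (hx : g (x i) ≠ x i)
    (hinj : Set.InjOn (eval i) (σ.support : Set (∀ i, X i))) : IsTop i := by
  intro j
  by_contra! hij
  obtain ⟨c, hc⟩ := exists_ne (x j)
  have hx' : x ∈ σ.support := mem_support_of_coord_moved hg (fun _ _ => rfl) hx
  have hxi : update x j c i = x i := update_of_ne hij.ne _ _
  have hmem : update x j c ∈ σ.support :=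
    mem_support_of_coord_moved hg (fun l hl => update_of_ne (hl.trans hij).ne _ _) (by rwa [hxi])
  exact hc (by simpa using congrFun (hinj hmem hx' hxi) j)

theorem image_eval_support (hblock : ∀ y ∈ σ.support, ∀ j < i, y j = x j)
    (hg : ∀ y, (∀ j < i, y j = x j) → σ y i = g (y i))
    (hinj : Set.InjOn (eval i) (σ.support : Set (∀ i, X i))) :
    σ.support.image (eval i) = ({t | g t ≠ t} : Finset (X i)) := by
  ext t
  simp only [mem_image, mem_filter, mem_univ, true_and]
  constructor
  · rintro ⟨y, hy, rfl⟩ hfix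
    exact mem_support.1 hy (hinj (apply_mem_support.2 hy) hy ((hg y (hblock y hy)).trans hfix))
  · intro ht
    exact ⟨_, mem_support_of_coord_moved hg (fun j hj => update_of_ne hj.ne _ _)
      (by rwa [update_self]), update_self _ _ _⟩

end CoordinateBlock

end Equiv.Perm

theorem IsIterAffine.exists_isTop_card_support {r : ℕ} {p : Fin r → ℕ} [∀ i, NeZero (p i)]
    (hp : ∀ i, (p i).Prime) {σ : Perm ((i : Fin r) → ZMod (p i))} (hσ : IsIterAffine p σ)
    (hc : σ.IsCycle) (hq : σ.support.card.Prime) :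
    ∃ i, IsTop i ∧ σ.support.card ≤ p i ∧ p i ≤ σ.support.card + 1 := by
  have : ∀ i, Fact (p i).Prime := fun i => ⟨hp i⟩
  obtain ⟨i, ⟨x, hx⟩, hlow⟩ := Perm.exists_minimal_moved_coord hc.ne_one
  have hxS : x ∈ σ.support := Perm.mem_support.2 fun h => hx (congrFun h i)
  have hblock : ∀ y ∈ σ.support, ∀ j < i, y j = x j := fun y hy j hj =>
    ((hc.sameCycle (Perm.mem_support.1 hxS) (Perm.mem_support.1 hy)).apply_eq_of_invariant
      (f := fun y => y j) fun y => hlow j hj y).symm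
  obtain ⟨a, b, -, hab⟩ := hσ i x
  set g : ZMod (p i) → ZMod (p i) := fun t => a * t + b
  have hg : ∀ y, (∀ j < i, y j = x j) → σ y i = g (y i) := hab
  have hxg : g (x i) ≠ x i := by rwa [← hg x fun _ _ => rfl]
  have hinj := hc.injOn_eval_support hq hblock hg hxg
  have hcard : σ.support.card = #{t | g t ≠ t} := by
    rw [← card_image_of_injOn hinj, Perm.image_eval_support hblock hg hinj]
  refine ⟨i, Perm.isTop_of_injOn_eval_support hg hxg hinj, ?_, ?_⟩
  · exact hcard ▸ (card_filter_le _ _).trans_eq (ZMod.card _)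
  · exact hcard ▸ (ZMod.card (p i)).symm.trans_le
      (card_le_card_filter_affine_ne_add_one ⟨_, hxg⟩)

theorem no_k_cycle_and_m_cycle_in_iterated_affine_wreath_general {r : ℕ} (p : Fin r → ℕ)
    [∀ i, NeZero (p i)] (hp : ∀ i, (p i).Prime)
    (k m : ℕ) (hk : k.Prime) (hm : m.Prime) (hk2 : k ≤ m - 2)
    (H : Subgroup (Equiv.Perm ((i : Fin r) → ZMod (p i))))
    (hHwr : ∀ σ ∈ H, IsIterAffine p σ) :
    ¬ ((∃ σ ∈ H, σ.IsCycle ∧ σ.support.card = k) ∧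
       (∃ τ ∈ H, τ.IsCycle ∧ τ.support.card = m)) := by
  rintro ⟨⟨σ, hσH, hσc, rfl⟩, ⟨τ, hτH, hτc, rfl⟩⟩
  obtain ⟨i, hi, hσ⟩ := (hHwr σ hσH).exists_isTop_card_support hp hσc hk
  obtain ⟨i', hi', hτ⟩ := (hHwr τ hτH).exists_isTop_card_support hp hτc hm
  obtain rfl : i = i' := le_antisymm (hi' i) (hi i')
  have := hk.two_le
  omega

/-- Let `k < m` be primes with `k ≤ m - 2`, and let `H` be a transitive
subgroup of the iterated wreath product `AGL₁(p (r-1)) ≀ ⋯ ≀ AGL₁(p 0)` acting on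
`n = ∏ i, p i` points, where `k*m ∣ n`. Then `H` cannot contain both a `k`-cycle
(fixing all other points) and an `m`-cycle (fixing all other points). -/
theorem no_k_cycle_and_m_cycle_in_iterated_affine_wreath {r : ℕ} (p : Fin r → ℕ)
    [∀ i, NeZero (p i)] (hp : ∀ i, (p i).Prime)
    (k m : ℕ) (hk : k.Prime) (hm : m.Prime) (hkm : k < m) (hk2 : k ≤ m - 2)
    (hdvd : k * m ∣ ∏ i, p i)
    (H : Subgroup (Equiv.Perm ((i : Fin r) → ZMod (p i))))
    (hHwr : ∀ σ ∈ H, IsIterAffine p σ)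
    (htrans : ∀ x y : (i : Fin r) → ZMod (p i), ∃ g ∈ H, g x = y) :
    ¬ ((∃ σ ∈ H, σ.IsCycle ∧ σ.support.card = k) ∧
       (∃ τ ∈ H, τ.IsCycle ∧ τ.support.card = m)) :=
  no_k_cycle_and_m_cycle_in_iterated_affine_wreath_general p hp k m hk hm hk2 H hHwr
end

section
/- Let f(X) = uX^d + v ∈ K[X] with u ≠ 0, over a number field K, and let p be a prime of O_K such that f(X) - a is irreducible mod p for some a ∈ O_K and such that the reduction is well-defined of degree d. Then N(p) ≡ 1 (mod q) for every prime q dividing d, and N(p) ≡ 1 (mod 4) if 4 divides d. -/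
/-!
Dividing by the leading coefficient, the residue field `F` of `p` carries an irreducible binomial
`X ^ d - α`. For `q ∣ d` prime, `α` is then not a `q`-th power; but if `q ∤ #F - 1`, then
`x ↦ x ^ q` is a bijection of `Fˣ`, so every element is a `q`-th power. For `4 ∣ d`, Capelli's
second obstruction applies: `X ^ 4m + 4 b ^ 4` factors by Sophie Germain's identity, so
`α ≠ -4 b ^ 4`. If `#F ≡ 3 (mod 4)`, then `-1` is a non-square, so the non-square `α` has `-α / 4`
a square, and squares are fourth powers since `t ^ 2 = (t ^ ((#F + 1) / 4)) ^ 4`; this writes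
`α = -4 b ^ 4`.
-/

open Polynomial NumberField

section Field

variable {K : Type*} [Field K]

theorem neg_four_mul_pow_four_ne_of_irreducible_X_pow_sub_C {n : ℕ} {a : K}
    (H : Irreducible (X ^ n - C a)) (hn : 4 ∣ n) (b : K) : -4 * b ^ 4 ≠ a := by
  rintro rfl
  obtain ⟨m, rfl⟩ := hn
  have hm : m ≠ 0 := by
    rintro rfl
    exact not_irreducible_C (1 - -4 * b ^ 4) (by simpa using H)
  have hfactor : (X ^ (4 * m) - C (-4 * b ^ 4) : K[X]) =
      (X ^ (2 * m) + C (-(2 * b)) * X ^ m + C (2 * b ^ 2)) *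
        (X ^ (2 * m) + C (2 * b) * X ^ m + C (2 * b ^ 2)) := by
    simp only [C_mul, C_neg, C_pow, map_ofNat]
    ring
  have hdeg (s : K) : (X ^ (2 * m) + C s * X ^ m + C (2 * b ^ 2)).natDegree = 2 * m := by
    compute_degree!
    all_goals first | omega | simp [hm, show 2 * m ≠ m by omega]
  rcases H.isUnit_or_isUnit hfactor with h | h <;>
  · have := natDegree_eq_zero_of_isUnit h
    rw [hdeg] at this
    omega

theorem irreducible_X_pow_sub_C_of_irreducible_C_mul_X_pow_add_C {n : ℕ} {u c : K} (hu : u ≠ 0)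
    (h : Irreducible (C u * X ^ n + C c)) : Irreducible (X ^ n - C (-(c / u))) := by
  have hfactor : C u * X ^ n + C c = C u * (X ^ n - C (-(c / u))) := by
    rw [mul_sub, ← C_mul, mul_neg, mul_div_cancel₀ _ hu, map_neg, sub_neg_eq_add]
  exact (irreducible_isUnit_mul (isUnit_C.mpr hu.isUnit)).mp (hfactor ▸ h)

end Field

namespace FiniteField

variable {F : Type*} [Field F] [Fintype F]

theorem exists_pow_eq_of_coprime {n : ℕ} (hn : n ≠ 0) (h : (Fintype.card F - 1).Coprime n)
    (x : F) : ∃ y : F, y ^ n = x := by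
  rcases eq_or_ne x 0 with rfl | hx
  · exact ⟨0, zero_pow hn⟩
  · classical
    rw [← Fintype.card_units, ← Nat.card_eq_fintype_card] at h
    obtain ⟨y, hy⟩ := h.pow_left_bijective.surjective (Units.mk0 x hx)
    exact ⟨y, by simpa using congrArg Units.val hy⟩

theorem card_modEq_one_of_irreducible_X_pow_sub_C {n q : ℕ} {a : F}
    (H : Irreducible (X ^ n - C a)) (hq : q.Prime) (hqn : q ∣ n) :
    Fintype.card F ≡ 1 [MOD q] := by
  refine ((Nat.modEq_iff_dvd' Fintype.card_pos).mpr ?_).symm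
  by_contra hndvd
  obtain ⟨y, hy⟩ := exists_pow_eq_of_coprime hq.ne_zero
    (hq.coprime_iff_not_dvd.mpr hndvd).symm a
  exact pow_ne_of_irreducible_X_pow_sub_C H hqn hq.one_lt.ne' y hy

theorem isSquare_mul_of_not_isSquare {x y : F} (hx : ¬IsSquare x) (hy : ¬IsSquare y) :
    IsSquare (x * y) := by
  classical
  have hxy : x * y ≠ 0 :=
    mul_ne_zero (fun h ↦ hx (h ▸ IsSquare.zero)) fun h ↦ hy (h ▸ IsSquare.zero)
  rw [← quadraticChar_one_iff_isSquare hxy, map_mul,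
    quadraticChar_neg_one_iff_not_isSquare.mpr hx, quadraticChar_neg_one_iff_not_isSquare.mpr hy]
  norm_num

section CardModFourEqThree

variable (hF : Fintype.card F % 4 = 3)
include hF

theorem exists_pow_four_eq_of_isSquare {x : F} (hx : IsSquare x) : ∃ y : F, y ^ 4 = x := by
  obtain ⟨t, rfl⟩ := hx
  rcases eq_or_ne t 0 with rfl | ht
  · exact ⟨0, by simp⟩
  refine ⟨t ^ ((Fintype.card F + 1) / 4), ?_⟩
  have hexp : (Fintype.card F + 1) / 4 * 4 = (Fintype.card F - 1) + 2 := by omega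
  rw [← pow_mul, hexp, pow_add, pow_card_sub_one_eq_one t ht, one_mul, sq]

theorem exists_neg_four_mul_pow_four_eq {x : F} (hx : ¬IsSquare x) :
    ∃ y : F, -4 * y ^ 4 = x := by
  have h2 : (2 : F) ≠ 0 := Ring.two_ne_zero fun hc ↦ by
    have := even_card_of_char_two hc
    omega
  have h4 : (4 : F) ≠ 0 := by simpa [show (4 : F) = 2 * 2 by norm_num] using h2
  have hneg : IsSquare (-x / 4) := by
    obtain ⟨r, hr⟩ := isSquare_mul_of_not_isSquare (by rw [isSquare_neg_one_iff]; omega) hx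
    exact ⟨r / 2, by rw [neg_eq_neg_one_mul, hr]; field_simp; norm_num⟩
  obtain ⟨y, hy⟩ := exists_pow_four_eq_of_isSquare hF hneg
  refine ⟨y, ?_⟩
  rw [hy]
  field_simp

end CardModFourEqThree

theorem card_modEq_one_of_irreducible_X_pow_sub_C_of_four_dvd {n : ℕ} {a : F}
    (H : Irreducible (X ^ n - C a)) (hn : 4 ∣ n) : Fintype.card F ≡ 1 [MOD 4] := by
  have h2n : 2 ∣ n := dvd_trans (by norm_num) hn
  have h2 := card_modEq_one_of_irreducible_X_pow_sub_C H Nat.prime_two h2n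
  by_contra h
  have hF : Fintype.card F % 4 = 3 := by
    unfold Nat.ModEq at h h2
    omega
  have ha : ¬IsSquare a := fun ⟨r, hr⟩ ↦
    pow_ne_of_irreducible_X_pow_sub_C H h2n (by norm_num) r (by rw [sq, hr])
  obtain ⟨y, hy⟩ := exists_neg_four_mul_pow_four_eq hF ha
  exact neg_four_mul_pow_four_ne_of_irreducible_X_pow_sub_C H hn y hy

end FiniteField

theorem norm_congruences_of_binomial_irreducible_mod_p_general
    {K : Type*} [Field K] [NumberField K]
    (u v a : 𝓞 K) (d : ℕ)
    (p : Ideal (𝓞 K)) [p.IsMaximal]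
    (hdeg : Ideal.Quotient.mk p u ≠ 0)
    (hirr : Irreducible
      (C (Ideal.Quotient.mk p u) * X ^ d + C (Ideal.Quotient.mk p (v - a)) :
        Polynomial ((𝓞 K) ⧸ p))) :
    (∀ q : ℕ, q.Prime → q ∣ d →
        ((Ideal.absNorm p : ZMod q) = 1)) ∧
      (4 ∣ d → ((Ideal.absNorm p : ZMod 4) = 1)) := by
  let := Ideal.Quotient.field p
  let := Fintype.ofFinite (𝓞 K ⧸ p)
  have hbinom := irreducible_X_pow_sub_C_of_irreducible_C_mul_X_pow_add_C hdeg hirr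
  have hcard : Ideal.absNorm p = Fintype.card (𝓞 K ⧸ p) := by
    rw [Ideal.absNorm_apply, Submodule.cardQuot_apply, Nat.card_eq_fintype_card]
  rw [hcard]
  refine ⟨fun q hq hqd ↦ ?_, fun h4d ↦ ?_⟩
  · simpa using (ZMod.natCast_eq_natCast_iff _ _ _).mpr
      (FiniteField.card_modEq_one_of_irreducible_X_pow_sub_C hbinom hq hqd)
  · simpa using (ZMod.natCast_eq_natCast_iff _ _ _).mpr
      (FiniteField.card_modEq_one_of_irreducible_X_pow_sub_C_of_four_dvd hbinom h4d)

/-- Let `f(X) = uX^d + v` over a number field `K` (with `u, v`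
integral, `u ≠ 0`), let `p` be a prime of `O_K` and `a ∈ O_K` such that the
reduction of `f(X) - a` mod `p` is well-defined of degree `d` (i.e. `u ∉ p`) and
irreducible. Then `N(p) ≡ 1 (mod q)` for every prime `q` dividing `d`, and
`N(p) ≡ 1 (mod 4)` if `4` divides `d`. -/
theorem norm_congruences_of_binomial_irreducible_mod_p
    {K : Type*} [Field K] [NumberField K]
    (u v a : 𝓞 K) (hu : u ≠ 0) (d : ℕ) (hd : 1 ≤ d)
    (p : Ideal (𝓞 K)) [p.IsMaximal]
    (hdeg : Ideal.Quotient.mk p u ≠ 0)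
    (hirr : Irreducible
      (C (Ideal.Quotient.mk p u) * X ^ d + C (Ideal.Quotient.mk p (v - a)) :
        Polynomial ((𝓞 K) ⧸ p))) :
    (∀ q : ℕ, q.Prime → q ∣ d →
        ((Ideal.absNorm p : ZMod q) = 1)) ∧
      (4 ∣ d → ((Ideal.absNorm p : ZMod 4) = 1)) :=
  norm_congruences_of_binomial_irreducible_mod_p_general u v a d p hdeg hirr
end

section
/- Let f(X) = r(X-a)^d + s(X-a)^k + b with a,b,r,s in a field K of characteristic 0, r,s ≠ 0, d odd, and 1 < k < d coprime to d. Then the critical points of f (roots of f') are exactly a and the d-k points γ_i = a + ζ_{d-k}^i · ((-ks)/(dr))^{1/(d-k)} for i = 1, ..., d-k; these points are pairwise distinct; the multiplicity of a as a root of f(X) - f(a) is k, and the multiplicity of each γ_i as a root of f(X) - f(γ_i) is 2. -/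
/-! With `q = d r (X - a)^(d-k) + k s`, one has `f' = (X - a)^(k-1) q`, so the critical points
other than `a` are the roots of `(X - a)^(d-k) = -k s / (d r)`, i.e. the points `γ i`. Since
`f - b = (X - a)^k (r (X - a)^(d-k) + s)` and `s ≠ 0`, `a` has multiplicity `k`. At `γ i` the
factor `q` vanishes, so `f''(γ i) = (γ i - a)^(k-1) q'(γ i) ≠ 0`; in characteristic zero a
simple root of `f'` is a double root of `f - f(γ i)`. -/

open Polynomial

namespace IsPrimitiveRoot

variable {R : Type*} [CommRing R] [IsDomain R] {ζ : R} {n : ℕ}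

theorem injOn_pow_mul_Icc (hζ : IsPrimitiveRoot ζ n) {α : R} (hα : α ≠ 0) :
    Set.InjOn (ζ ^ · * α) (Finset.Icc 1 n) := by
  intro i hi j hj e
  simp only [Finset.coe_Icc, Set.mem_Icc] at hi hj
  have hζα : ζ * α ≠ 0 := mul_ne_zero (hζ.ne_zero (by omega)) hα
  have hshift : ∀ m, 1 ≤ m → ζ ^ m * α = ζ ^ (m - 1) * (ζ * α) := fun m hm => by
    rw [← mul_assoc, ← pow_succ, Nat.sub_add_cancel hm]
  have := hζ.injOn_pow_mul hζα (by simp; omega : i - 1 ∈ (Finset.range n : Set ℕ))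
    (by simp; omega : j - 1 ∈ (Finset.range n : Set ℕ))
    (by simpa only [hshift i hi.1, hshift j hj.1] using e)
  omega

theorem pow_eq_pow_iff_exists_Icc (hζ : IsPrimitiveRoot ζ n) (hn : 0 < n) {α y : R} :
    y ^ n = α ^ n ↔ ∃ i ∈ Finset.Icc 1 n, y = ζ ^ i * α := by
  -- taking `ζ * α` as base point shifts the index set `range n` to `Icc 1 n`
  have hζα : (ζ * α) ^ n = α ^ n := by rw [mul_pow, hζ.pow_eq_one, one_mul]
  rw [← mem_nthRoots hn, hζ.nthRoots_eq hζα, Multiset.mem_map]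
  constructor
  · rintro ⟨i, hi, rfl⟩
    exact ⟨i + 1, by simp at hi ⊢; omega, by ring⟩
  · rintro ⟨i, hi, rfl⟩
    simp only [Finset.mem_Icc] at hi
    exact ⟨i - 1, by simp; omega, by rw [← mul_assoc, ← pow_succ, Nat.sub_add_cancel hi.1]⟩

end IsPrimitiveRoot

namespace Polynomial

theorem eval_derivative_mul_of_isRoot {R : Type*} [CommSemiring R] {p q : R[X]} {t : R}
    (hq : q.IsRoot t) : (derivative (p * q)).eval t = p.eval t * (derivative q).eval t := by
  simp [derivative_mul, hq.eq_zero]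

theorem rootMultiplicity_sub_C_eval_eq_two {F : Type*} [Field F] [CharZero F] {p : F[X]} {t : F}
    (h1 : (derivative p).IsRoot t) (h2 : ¬ (derivative (derivative p)).IsRoot t) :
    (p - C (p.eval t)).rootMultiplicity t = 2 := by
  set g := p - C (p.eval t)
  have hg' : derivative g = derivative p := by simp [g]
  have hg0 : g ≠ 0 := fun h => h2 (by simp [← hg', h])
  have hlt : 1 < g.rootMultiplicity t := by
    refine (lt_rootMultiplicity_iff_isRoot_iterate_derivative hg0).2 fun m hm => ?_
    interval_cases m
    · simp [g]
    · simpa [hg'] using h1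
  have hle : ¬ 2 < g.rootMultiplicity t := fun h =>
    h2 (by simpa [hg'] using (lt_rootMultiplicity_iff_isRoot_iterate_derivative hg0).1 h 2 le_rfl)
  omega

end Polynomial

section ShiftedTrinomial

variable {F : Type*} [Field F] (A R S B : F) (d k : ℕ)

noncomputable def shiftedTrinomial : F[X] :=
  C R * (X - C A) ^ d + C S * (X - C A) ^ k + C B

theorem shiftedTrinomial_eval_self (hd : d ≠ 0) (hk : k ≠ 0) :
    (shiftedTrinomial A R S B d k).eval A = B := by
  simp [shiftedTrinomial, zero_pow hd, zero_pow hk]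

theorem shiftedTrinomial_sub_C (hkd : k ≤ d) :
    shiftedTrinomial A R S B d k - C B = (C R * (X - C A) ^ (d - k) + C S) * (X - C A) ^ k := by
  rw [shiftedTrinomial, ← Nat.sub_add_cancel hkd, pow_add, Nat.add_sub_cancel]
  ring

theorem derivative_shiftedTrinomial (hk : 1 ≤ k) (hkd : k ≤ d) :
    derivative (shiftedTrinomial A R S B d k) =
      (X - C A) ^ (k - 1) * (C (d * R) * (X - C A) ^ (d - k) + C (k * S)) := by
  simp only [shiftedTrinomial, derivative_add, derivative_C_mul, derivative_X_sub_C_pow,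
    derivative_C, add_zero, map_mul]
  rw [show d - 1 = d - k + (k - 1) by omega, pow_add]
  ring

variable {A R S B d k}

theorem isRoot_derivative_shiftedTrinomial_iff (hk : 1 < k) (hkd : k ≤ d)
    (hdR : (d : F) * R ≠ 0) (x : F) : (derivative (shiftedTrinomial A R S B d k)).IsRoot x ↔
      x = A ∨ (x - A) ^ (d - k) = -(k : F) * S / (d * R) := by
  rw [derivative_shiftedTrinomial A R S B d k (by omega) hkd]
  simp only [IsRoot, eval_mul, eval_pow, eval_add, eval_sub, eval_X, eval_C, mul_eq_zero,
    pow_eq_zero_iff (by omega : k - 1 ≠ 0), sub_eq_zero, eq_div_iff hdR]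
  exact or_congr_right ⟨fun h => by linear_combination h, fun h => by linear_combination h⟩

theorem rootMultiplicity_shiftedTrinomial_sub_eval_self (hS : S ≠ 0) (hk : k ≠ 0)
    (hkd : k < d) :
    (shiftedTrinomial A R S B d k - C ((shiftedTrinomial A R S B d k).eval A)).rootMultiplicity A
      = k := by
  have hq : ¬ (C R * (X - C A) ^ (d - k) + C S).IsRoot A := by
    simp [zero_pow (by omega : d - k ≠ 0), hS]
  rw [shiftedTrinomial_eval_self A R S B d k (by omega) hk,
    shiftedTrinomial_sub_C A R S B d k hkd.le,
    rootMultiplicity_mul_X_sub_C_pow (fun h => hq (by simp [h])), rootMultiplicity_eq_zero hq,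
    zero_add]

theorem rootMultiplicity_shiftedTrinomial_sub_eval_of_ne [CharZero F] (hR : R ≠ 0)
    (hk : 1 ≤ k) (hkd : k < d) {t : F} (ht : t ≠ A)
    (hcrit : (derivative (shiftedTrinomial A R S B d k)).IsRoot t) :
    (shiftedTrinomial A R S B d k - C ((shiftedTrinomial A R S B d k).eval t)).rootMultiplicity t
      = 2 := by
  have hq : (C (d * R) * (X - C A) ^ (d - k) + C (k * S)).IsRoot t := by
    rw [derivative_shiftedTrinomial A R S B d k hk hkd.le, IsRoot, eval_mul] at hcrit
    simpa [sub_ne_zero.2 ht] using hcrit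
  refine rootMultiplicity_sub_C_eval_eq_two hcrit ?_
  rw [derivative_shiftedTrinomial A R S B d k hk hkd.le, IsRoot, eval_derivative_mul_of_isRoot hq]
  have hd : (d : F) ≠ 0 := Nat.cast_ne_zero.2 (by omega)
  have hdk : ((d - k : ℕ) : F) ≠ 0 := Nat.cast_ne_zero.2 (by omega)
  simp [derivative_X_sub_C_pow, hd, hdk, hR, sub_ne_zero.2 ht]

end ShiftedTrinomial

theorem trinomial_critical_points_general
    {K : Type*} [Field K] [CharZero K] (a b r s : K) (hr : r ≠ 0) (hs : s ≠ 0)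
    (d k : ℕ) (hk1 : 1 < k) (hkd : k < d)
    (Ω : Type*) [Field Ω] [Algebra K Ω]
    (ζ : Ω) (hζ : IsPrimitiveRoot ζ (d - k))
    (c : Ω) (hc : c ^ (d - k) = (-(k : Ω) * algebraMap K Ω s) / ((d : Ω) * algebraMap K Ω r))
    (γ : ℕ → Ω) (hγ : ∀ i, γ i = algebraMap K Ω a + ζ ^ i * c)
    (f : Polynomial Ω)
    (hf : f = C (algebraMap K Ω r) * (X - C (algebraMap K Ω a)) ^ d
        + C (algebraMap K Ω s) * (X - C (algebraMap K Ω a)) ^ k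
        + C (algebraMap K Ω b)) :
    (∀ x : Ω, (derivative f).eval x = 0 ↔
        (x = algebraMap K Ω a ∨ ∃ i ∈ Finset.Icc 1 (d - k), x = γ i)) ∧
    (∀ i ∈ Finset.Icc 1 (d - k), γ i ≠ algebraMap K Ω a) ∧
    (∀ i ∈ Finset.Icc 1 (d - k), ∀ j ∈ Finset.Icc 1 (d - k), γ i = γ j → i = j) ∧
    (f - C (f.eval (algebraMap K Ω a))).rootMultiplicity (algebraMap K Ω a) = k ∧
    (∀ i ∈ Finset.Icc 1 (d - k),
      (f - C (f.eval (γ i))).rootMultiplicity (γ i) = 2) := by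
  have : CharZero Ω := charZero_of_injective_algebraMap (algebraMap K Ω).injective
  set A := algebraMap K Ω a
  have hR : algebraMap K Ω r ≠ 0 := by simpa
  have hS : algebraMap K Ω s ≠ 0 := by simpa
  have hdR : (d : Ω) * algebraMap K Ω r ≠ 0 := mul_ne_zero (Nat.cast_ne_zero.2 (by omega)) hR
  have hc0 : c ≠ 0 := by
    rintro rfl
    simp [zero_pow (by omega : d - k ≠ 0), eq_div_iff hdR, hS] at hc
    omega
  have hγA : ∀ i, γ i ≠ A := fun i h => by
    simp [hγ, A, hc0, hζ.ne_zero (by omega : d - k ≠ 0)] at h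
  replace hf :
      f = shiftedTrinomial A (algebraMap K Ω r) (algebraMap K Ω s) (algebraMap K Ω b) d k := hf
  have hcrit (x : Ω) :
      (derivative f).IsRoot x ↔ x = A ∨ ∃ i ∈ Finset.Icc 1 (d - k), x = γ i := by
    rw [hf, isRoot_derivative_shiftedTrinomial_iff hk1 hkd.le hdR, ← hc,
      hζ.pow_eq_pow_iff_exists_Icc (by omega)]
    simp [hγ, sub_eq_iff_eq_add']
  refine ⟨hcrit, fun i _ => hγA i, fun i hi j hj h => ?_, ?_, fun i hi => ?_⟩
  · exact hζ.injOn_pow_mul_Icc hc0 hi hj (by simpa [hγ] using h)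
  · rw [hf]
    exact rootMultiplicity_shiftedTrinomial_sub_eval_self hS (by omega) hkd
  · rw [hf] at hcrit ⊢
    exact rootMultiplicity_shiftedTrinomial_sub_eval_of_ne hR (by omega) hkd (hγA i)
      ((hcrit _).2 (.inr ⟨i, hi, rfl⟩))

/-- Let `f(X) = r(X-a)^d + s(X-a)^k + b` with `a, b, r, s` in a field
`K` of characteristic `0`, `r, s ≠ 0`, `d` odd, and `1 < k < d` coprime to `d`.
Then, in an algebraic closure `Ω` of `K`, the critical points of `f` (roots of
`f'`) are exactly `a` and the `d-k` points `γ i = a + ζ^i·c` for `i = 1, …, d-k`,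
where `ζ` is a primitive `(d-k)`-th root of unity and `c` is a `(d-k)`-th root of
`(-ks)/(dr)`; these points are pairwise distinct; the multiplicity of `a` as a root
of `f(X) - f(a)` is `k`, and the multiplicity of each `γ i` as a root of
`f(X) - f(γ i)` is `2`. -/
theorem trinomial_critical_points
    {K : Type*} [Field K] [CharZero K] (a b r s : K) (hr : r ≠ 0) (hs : s ≠ 0)
    (d k : ℕ) (hdodd : Odd d) (hk1 : 1 < k) (hkd : k < d) (hcop : Nat.Coprime k d)
    (Ω : Type*) [Field Ω] [IsAlgClosed Ω] [Algebra K Ω]  [IsAlgClosure K Ω]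
    (ζ : Ω) (hζ : IsPrimitiveRoot ζ (d - k))
    (c : Ω) (hc : c ^ (d - k) = (-(k : Ω) * algebraMap K Ω s) / ((d : Ω) * algebraMap K Ω r))
    (γ : ℕ → Ω) (hγ : ∀ i, γ i = algebraMap K Ω a + ζ ^ i * c)
    (f : Polynomial Ω)
    (hf : f = C (algebraMap K Ω r) * (X - C (algebraMap K Ω a)) ^ d
        + C (algebraMap K Ω s) * (X - C (algebraMap K Ω a)) ^ k
        + C (algebraMap K Ω b)) :
    (∀ x : Ω, (derivative f).eval x = 0 ↔
        (x = algebraMap K Ω a ∨ ∃ i ∈ Finset.Icc 1 (d - k), x = γ i)) ∧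
    (∀ i ∈ Finset.Icc 1 (d - k), γ i ≠ algebraMap K Ω a) ∧
    (∀ i ∈ Finset.Icc 1 (d - k), ∀ j ∈ Finset.Icc 1 (d - k), γ i = γ j → i = j) ∧
    (f - C (f.eval (algebraMap K Ω a))).rootMultiplicity (algebraMap K Ω a) = k ∧
    (∀ i ∈ Finset.Icc 1 (d - k),
      (f - C (f.eval (γ i))).rootMultiplicity (γ i) = 2) :=
  trinomial_critical_points_general a b r s hr hs d k hk1 hkd Ω ζ hζ c hc γ hγ f hf
end
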